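/- Let n ≥ 1, γ > 1, and constants C_v, C_{Dv}, C_ρ, C_p > 0, R₀ > 0, ε > 0. There is no global C² classical solution (ρ, v, p) on [0,∞) × ℝⁿ of the compressible Navier–Stokes system with zero heat conduction having ρ ≥ 0, p ≥ 0, finite positive total mass, finite positive conserved total energy, finite momentum of mass G(t) = ½∫ρ|x|² dx satisfying G''(t) = 2E_k(t) + n(γ−1)E_i(t), and the time-independent decay bounds |v(t,x)| ≤ C_v|x|^{−n}, |D_x v(t,x)| ≤ C_{Dv}|x|^{−n−1}, ρ(t,x) ≤ C_ρ|x|^{−n−2−ε}, p(t,x) ≤ C_p|x|^{−n−ε} for all t ≥ 0 and all |x| > (R₀^{n+1} + (n+1)C_v t)^{1/(n+1)}. -/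

import Mathlib

open MeasureTheory Real
open scoped RealInnerProductSpace

/-- Time partial derivative `∂_t f` of a function on `ℝ × ℝⁿ`. -/
noncomputable def pdT {n : ℕ} (f : ℝ × EuclideanSpace ℝ (Fin n) → ℝ) :
    ℝ × EuclideanSpace ℝ (Fin n) → ℝ :=
  fun q => deriv (fun s => f (s, q.2)) q.1

/-- Spatial partial derivative `∂_{x_i} f` of a function on `ℝ × ℝⁿ`. -/
noncomputable def pdX {n : ℕ} (f : ℝ × EuclideanSpace ℝ (Fin n) → ℝ) (i : Fin n) :
    ℝ × EuclideanSpace ℝ (Fin n) → ℝ :=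
  fun q => fderiv ℝ (fun y => f (q.1, y)) q.2 (EuclideanSpace.single i 1)

/-- Spatial divergence of a (time-dependent) vector field on `ℝ × ℝⁿ`. -/
noncomputable def divX {n : ℕ} (w : ℝ × EuclideanSpace ℝ (Fin n) → EuclideanSpace ℝ (Fin n)) :
    ℝ × EuclideanSpace ℝ (Fin n) → ℝ :=
  fun q => ∑ i, pdX (fun z => w z i) i q

/-
The energy identity bounds `G'' = 2E_k + n(γ-1)E_i` from below by `min 2 (n(γ-1)) · 𝓔 > 0`,
so `G(t)` grows at least quadratically. On the other hand, inside the ball of radius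
`R(t) = (R₀^{n+1} + (n+1)C_v t)^{1/(n+1)}` the second moment of `ρ` is at most `m R(t)^2`,
which is linear in `t` since `n ≥ 1`, while outside it the decay `ρ ≤ C_ρ |x|^{-n-2-ε}`
leaves a tail bounded uniformly in `t`. Hence `G(t)` grows at most linearly.
-/

open Set Filter

theorem sub_le_sub_of_hasDerivAt_le {f g f' g' : ℝ → ℝ} {a b : ℝ}
    (hf : ∀ t, a ≤ t → HasDerivAt f (f' t) t) (hg : ∀ t, a ≤ t → HasDerivAt g (g' t) t)
    (hle : ∀ t, a ≤ t → g' t ≤ f' t) (hab : a ≤ b) : g b - g a ≤ f b - f a := by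
  have hmono : MonotoneOn (f - g) (Ici a) := by
    refine monotoneOn_of_hasDerivWithinAt_nonneg (convex_Ici a) (fun t ht => ?_)
      (fun t ht => ?_) (fun t ht => ?_) (f' := f' - g')
    · exact ((hf t ht).sub (hg t ht)).continuousAt.continuousWithinAt
    · rw [interior_Ici] at ht
      exact ((hf t ht.le).sub (hg t ht.le)).hasDerivWithinAt
    · rw [interior_Ici] at ht
      exact sub_nonneg.2 (hle t ht.le)
  have := hmono self_mem_Ici hab hab
  simp only [Pi.sub_apply] at this
  linarith

theorem add_mul_add_sq_le_of_le_deriv_deriv {f F : ℝ → ℝ} {k t : ℝ}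
    (hf : ∀ s, 0 ≤ s → DifferentiableAt ℝ f s)
    (hf' : ∀ s, 0 ≤ s → HasDerivAt (deriv f) (F s) s) (hF : ∀ s, 0 ≤ s → k ≤ F s)
    (ht : 0 ≤ t) : f 0 + deriv f 0 * t + k / 2 * t ^ 2 ≤ f t := by
  have hderiv : ∀ s, 0 ≤ s → deriv f 0 + k * s ≤ deriv f s := fun s hs => by
    have := sub_le_sub_of_hasDerivAt_le hf' (fun u _ => hasDerivAt_mul_const k) hF hs
    simp only [zero_mul, sub_zero] at this
    linarith
  have hquad : ∀ s, HasDerivAt (fun u => deriv f 0 * u + k / 2 * u ^ 2) (deriv f 0 + k * s) s :=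
    fun s => (((hasDerivAt_id' s).const_mul (deriv f 0)).add
      ((hasDerivAt_pow 2 s).const_mul (k / 2))).congr_deriv (by push_cast; ring)
  have := sub_le_sub_of_hasDerivAt_le (fun s hs => (hf s hs).hasDerivAt) (fun s _ => hquad s)
    hderiv ht
  simp only [mul_zero, ne_eq, OfNat.ofNat_ne_zero, not_false_eq_true, zero_pow, add_zero,
    sub_zero] at this
  linarith

theorem exists_add_mul_lt_add_mul_add_sq (A B a b : ℝ) {k : ℝ} (hk : 0 < k) :
    ∃ t, 0 ≤ t ∧ A + B * t < a + b * t + k * t ^ 2 := by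
  set t := max 1 ((|A - a| + |B - b| + 1) / k)
  have ht1 : 1 ≤ t := le_max_left _ _
  have hkt : |A - a| + |B - b| + 1 ≤ k * t := by
    rw [← div_le_iff₀' hk]; exact le_max_right _ _
  refine ⟨t, by linarith, ?_⟩
  nlinarith [le_abs_self (A - a), le_abs_self (B - b), abs_nonneg (A - a),
    mul_le_mul_of_nonneg_right hkt (by linarith : (0:ℝ) ≤ t)]

theorem min_mul_add_le_add_mul {α β x y : ℝ} (hx : 0 ≤ x) (hy : 0 ≤ y) :
    min α β * (x + y) ≤ α * x + β * y := by
  nlinarith [mul_le_mul_of_nonneg_right (min_le_left α β) hx,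
    mul_le_mul_of_nonneg_right (min_le_right α β) hy]

theorem le_rpow_one_div_add {r q u : ℝ} (hr : 0 ≤ r) (hq : 0 < q) (hu : 0 ≤ u) :
    r ≤ (r ^ q + u) ^ (1 / q) := by
  calc r = (r ^ q) ^ (1 / q) := by rw [one_div, rpow_rpow_inv hr hq.ne']
    _ ≤ (r ^ q + u) ^ (1 / q) := by gcongr; linarith

theorem rpow_one_div_sq_le_one_add {y q : ℝ} (hy : 0 ≤ y) (hq : 2 ≤ q) :
    (y ^ (1 / q)) ^ 2 ≤ 1 + y := by
  have hp : 2 / q ≤ 1 := (div_le_one (by linarith)).2 hq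
  rw [← rpow_natCast, ← rpow_mul hy]
  calc y ^ (1 / q * (2 : ℕ)) = (1 + (y - 1)) ^ (2 / q) := by congr 1 <;> push_cast <;> ring
    _ ≤ 1 + 2 / q * (y - 1) :=
      rpow_one_add_le_one_add_mul_self (by linarith) (by positivity) hp
    _ ≤ 1 + y := by nlinarith [div_nonneg zero_le_two (by linarith : (0:ℝ) ≤ q)]

section SecondMoment

variable {E : Type*} [NormedAddCommGroup E] [MeasurableSpace E] [BorelSpace E] {μ : Measure E}

theorem integral_mul_norm_sq_le_add_setIntegral {f g : E → ℝ} {R : ℝ} (hf0 : ∀ x, 0 ≤ f x)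
    (hf : Integrable f μ) (hf2 : Integrable (fun x => f x * ‖x‖ ^ 2) μ)
    (hg : IntegrableOn g {x | R < ‖x‖} μ) (hfg : ∀ x, R < ‖x‖ → f x * ‖x‖ ^ 2 ≤ g x) :
    ∫ x, f x * ‖x‖ ^ 2 ∂μ ≤ R ^ 2 * ∫ x, f x ∂μ + ∫ x in {x | R < ‖x‖}, g x ∂μ := by
  set S : Set E := {x | R < ‖x‖}
  have hS : MeasurableSet S := measurableSet_lt measurable_const measurable_norm
  have hinner : ∫ x in Sᶜ, f x * ‖x‖ ^ 2 ∂μ ≤ R ^ 2 * ∫ x, f x ∂μ :=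
    calc ∫ x in Sᶜ, f x * ‖x‖ ^ 2 ∂μ ≤ ∫ x in Sᶜ, R ^ 2 * f x ∂μ := by
          refine setIntegral_mono_on hf2.integrableOn (hf.const_mul _).integrableOn hS.compl
            fun x hx => ?_
          have hxR : ‖x‖ ≤ R := not_lt.1 hx
          rw [mul_comm]
          gcongr
          exact hf0 x
      _ ≤ R ^ 2 * ∫ x, f x ∂μ := by
          rw [integral_const_mul]
          exact mul_le_mul_of_nonneg_left
            (setIntegral_le_integral hf (Eventually.of_forall hf0)) (sq_nonneg R)
  have houter : ∫ x in S, f x * ‖x‖ ^ 2 ∂μ ≤ ∫ x in S, g x ∂μ :=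
    setIntegral_mono_on hf2.integrableOn hg hS hfg
  rw [← integral_add_compl hS hf2]
  linarith

variable [NormedSpace ℝ E] [FiniteDimensional ℝ E] [μ.IsAddHaarMeasure]

theorem integrableOn_norm_rpow_neg {s R₀ : ℝ} (hs : (Module.finrank ℝ E : ℝ) < s) (hR₀ : 0 < R₀) :
    IntegrableOn (fun x : E => ‖x‖ ^ (-s)) {x | R₀ < ‖x‖} μ := by
  have hs0 : 0 < s := lt_of_le_of_lt (Nat.cast_nonneg _) hs
  refine (((integrable_one_add_norm hs).const_mul ((1 + 1 / R₀) ^ s)).integrableOn).mono'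
    (measurable_norm.pow_const _).aestronglyMeasurable ?_
  refine (ae_restrict_iff' (measurableSet_lt measurable_const measurable_norm)).2
    (Eventually.of_forall fun x (hx : R₀ < ‖x‖) => ?_)
  have hx0 : 0 < ‖x‖ := hR₀.trans hx
  have hratio : (1 + ‖x‖) / ‖x‖ ≤ 1 + 1 / R₀ := by
    rw [div_le_iff₀ hx0, add_mul, one_mul, add_comm, one_div_mul_eq_div]
    gcongr
    exact (one_le_div hR₀).2 hx.le
  calc ‖‖x‖ ^ (-s)‖ = ((1 + ‖x‖) / ‖x‖) ^ s * (1 + ‖x‖) ^ (-s) := by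
        rw [norm_of_nonneg (by positivity), div_rpow (by positivity) hx0.le, rpow_neg hx0.le,
          rpow_neg (by positivity : (0:ℝ) ≤ 1 + ‖x‖)]
        field_simp
    _ ≤ (1 + 1 / R₀) ^ s * (1 + ‖x‖) ^ (-s) := by gcongr

theorem integral_mul_norm_sq_le_of_decay {f : E → ℝ} {C R₀ R s : ℝ}
    (hs : (Module.finrank ℝ E : ℝ) < s) (hR₀ : 0 < R₀) (hR : R₀ ≤ R) (hC : 0 ≤ C)
    (hf0 : ∀ x, 0 ≤ f x) (hf : Integrable f μ) (hf2 : Integrable (fun x => f x * ‖x‖ ^ 2) μ)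
    (hdecay : ∀ x, R < ‖x‖ → f x ≤ C * ‖x‖ ^ (-s - 2)) :
    ∫ x, f x * ‖x‖ ^ 2 ∂μ ≤ R ^ 2 * ∫ x, f x ∂μ + C * ∫ x in {x | R₀ < ‖x‖}, ‖x‖ ^ (-s) ∂μ := by
  have htail := (integrableOn_norm_rpow_neg (μ := μ) hs hR₀).const_mul C
  have hmoment := integral_mul_norm_sq_le_add_setIntegral hf0 hf hf2
    (IntegrableOn.mono_set htail fun x (hx : R < ‖x‖) => hR.trans_lt hx) fun x hx => by
      have hx0 : 0 < ‖x‖ := hR₀.trans_le hR |>.trans hx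
      calc f x * ‖x‖ ^ 2 ≤ C * ‖x‖ ^ (-s - 2) * ‖x‖ ^ 2 := by gcongr; exact hdecay x hx
        _ = C * ‖x‖ ^ (-s) := by
          rw [mul_assoc, ← rpow_natCast, ← rpow_add hx0]; norm_num
  have hmono : ∫ x in {x | R < ‖x‖}, C * ‖x‖ ^ (-s) ∂μ
      ≤ ∫ x in {x | R₀ < ‖x‖}, C * ‖x‖ ^ (-s) ∂μ :=
    setIntegral_mono_set htail (Eventually.of_forall fun x => by positivity)
      (Eventually.of_forall fun x (hx : R < ‖x‖) => hR.trans_lt hx)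
  simp only [integral_const_mul] at hmoment hmono
  linarith

end SecondMoment

theorem navier_stokes_no_solution_with_constant_bounds_general
    (n : ℕ) (hn : 1 ≤ n) (γ : ℝ) (hγ : 1 < γ)
    (Cv CDv Cρ Cp R₀ ε : ℝ)
    (hCv : 0 < Cv) (hCρ : 0 < Cρ)
    (hR₀ : 0 < R₀) (hε : 0 < ε)
    (ρ p : ℝ × EuclideanSpace ℝ (Fin n) → ℝ)
    (v : ℝ × EuclideanSpace ℝ (Fin n) → EuclideanSpace ℝ (Fin n))
    (hρnonneg : ∀ q, 0 ≤ q.1 → 0 ≤ ρ q) (hpnonneg : ∀ q, 0 ≤ q.1 → 0 ≤ p q)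
    -- finite positive total mass, constant in time
    (m : ℝ) (hm : 0 < m)
    (hmass : ∀ t : ℝ, 0 ≤ t → Integrable (fun x => ρ (t, x)) ∧ (∫ x, ρ (t, x)) = m)
    -- finite positive conserved total energy
    (𝓔 : ℝ) (h𝓔 : 0 < 𝓔)
    (henergy : ∀ t : ℝ, 0 ≤ t →
      (1/2) * (∫ x, ρ (t, x) * ‖v (t, x)‖ ^ 2) + (1 / (γ - 1)) * (∫ x, p (t, x)) = 𝓔)
    -- finite momentum of mass satisfying G'' = 2E_k + n(γ−1)E_i
    (hGint : ∀ t : ℝ, 0 ≤ t → Integrable (fun x => ρ (t, x) * ‖x‖ ^ 2))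
    (hGdiff : ∀ t : ℝ, 0 ≤ t →
      DifferentiableAt ℝ (fun s => (1/2) * ∫ x, ρ (s, x) * ‖x‖ ^ 2) t)
    (hG'' : ∀ t : ℝ, 0 ≤ t →
      HasDerivAt (deriv (fun s => (1/2) * ∫ x, ρ (s, x) * ‖x‖ ^ 2))
        (2 * ((1/2) * ∫ x, ρ (t, x) * ‖v (t, x)‖ ^ 2)
          + n * (γ - 1) * ((1 / (γ - 1)) * ∫ x, p (t, x))) t)
    -- time-independent decay bounds
    (hdecay : ∀ t : ℝ, 0 ≤ t → ∀ x : EuclideanSpace ℝ (Fin n),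
      (R₀ ^ ((n:ℝ) + 1) + ((n:ℝ) + 1) * Cv * t) ^ (1 / ((n:ℝ) + 1)) < ‖x‖ →
      ‖v (t, x)‖ ≤ Cv * ‖x‖ ^ (-(n:ℝ)) ∧
      ‖fderiv ℝ (fun y => v (t, y)) x‖ ≤ CDv * ‖x‖ ^ (-(n:ℝ) - 1) ∧
      ρ (t, x) ≤ Cρ * ‖x‖ ^ (-(n:ℝ) - 2 - ε) ∧
      p (t, x) ≤ Cp * ‖x‖ ^ (-(n:ℝ) - ε)) :
    False := by
  set G : ℝ → ℝ := fun s => (1/2) * ∫ x, ρ (s, x) * ‖x‖ ^ 2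
  have hn' : (2 : ℝ) ≤ n + 1 := by norm_cast; omega
  have hγ' : 0 < γ - 1 := sub_pos.2 hγ
  set c := min 2 ((n : ℝ) * (γ - 1))
  have hc : 0 < c := lt_min two_pos (mul_pos (by linarith) hγ')
  have hlower : ∀ t, 0 ≤ t → G 0 + deriv G 0 * t + c * 𝓔 / 2 * t ^ 2 ≤ G t :=
    fun t ht => add_mul_add_sq_le_of_le_deriv_deriv hGdiff hG'' (fun s hs => by
      rw [← henergy s hs]
      exact min_mul_add_le_add_mul
        (mul_nonneg one_half_pos.le (integral_nonneg fun x =>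
          mul_nonneg (hρnonneg (s, x) hs) (sq_nonneg _)))
        (mul_nonneg (by positivity) (integral_nonneg fun x => hpnonneg (s, x) hs))) ht
  set K := Cρ * ∫ x : EuclideanSpace ℝ (Fin n) in {x | R₀ < ‖x‖}, ‖x‖ ^ (-((n : ℝ) + ε))
  have hupper : ∀ t, 0 ≤ t →
      G t ≤ (m * (1 + R₀ ^ ((n : ℝ) + 1)) + K) / 2 + m * ((n : ℝ) + 1) * Cv / 2 * t := by
    intro t ht
    have hy : 0 ≤ ((n : ℝ) + 1) * Cv * t := by positivity
    have hmoment := integral_mul_norm_sq_le_of_decay (s := (n : ℝ) + ε)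
      (by rw [finrank_euclideanSpace_fin]; linarith)
      hR₀ (le_rpow_one_div_add hR₀.le (by linarith : (0 : ℝ) < n + 1) hy) hCρ.le (fun x => hρnonneg (t, x) ht)
      (hmass t ht).1 (hGint t ht) fun x hx => by
        simpa only [show -((n : ℝ) + ε) - 2 = -(n : ℝ) - 2 - ε by ring]
          using (hdecay t ht x hx).2.2.1
    have hR := rpow_one_div_sq_le_one_add
      (by positivity : 0 ≤ R₀ ^ ((n : ℝ) + 1) + ((n : ℝ) + 1) * Cv * t) hn'
    rw [(hmass t ht).2] at hmoment
    have := mul_le_mul_of_nonneg_right hR hm.le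
    simp only [G]
    linarith
  obtain ⟨t, ht, hlt⟩ := exists_add_mul_lt_add_mul_add_sq
    ((m * (1 + R₀ ^ ((n : ℝ) + 1)) + K) / 2) (m * ((n : ℝ) + 1) * Cv / 2) (G 0) (deriv G 0)
    (by positivity : 0 < c * 𝓔 / 2)
  linarith [hlower t ht, hupper t ht]

/-- Remark 3: there is no global classical solution of the compressible
Navier–Stokes system with zero heat conduction, with positive finite mass and energy, finite
momentum of mass satisfying `G'' = 2E_k + n(γ−1)E_i`, and *time-independent* decay bounds
of the class `K_{NS₀}`. -/
theorem navier_stokes_no_solution_with_constant_bounds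
    (n : ℕ) (hn : 1 ≤ n) (γ μ lam : ℝ) (hγ : 1 < γ)
    (hμ : 0 ≤ μ) (hlam : 0 ≤ lam + (2 / n) * μ)
    (Cv CDv Cρ Cp R₀ ε : ℝ)
    (hCv : 0 < Cv) (hCDv : 0 < CDv) (hCρ : 0 < Cρ) (hCp : 0 < Cp)
    (hR₀ : 0 < R₀) (hε : 0 < ε)
    (ρ p : ℝ × EuclideanSpace ℝ (Fin n) → ℝ)
    (v : ℝ × EuclideanSpace ℝ (Fin n) → EuclideanSpace ℝ (Fin n))
    (T : ℝ × EuclideanSpace ℝ (Fin n) → Fin n → Fin n → ℝ)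
    (hρ : ContDiff ℝ 2 ρ) (hv : ContDiff ℝ 2 v) (hp : ContDiff ℝ 2 p)
    (hρnonneg : ∀ q, 0 ≤ q.1 → 0 ≤ ρ q) (hpnonneg : ∀ q, 0 ≤ q.1 → 0 ≤ p q)
    -- the Newton-law stress tensor
    (hT : ∀ q i j, T q i j =
      μ * (pdX (fun z => v z j) i q + pdX (fun z => v z i) j q)
        + lam * divX v q * (if i = j then 1 else 0))
    -- the compressible Navier–Stokes system with zero heat conduction on [0,∞) × ℝⁿ
    (hcont : ∀ q : ℝ × EuclideanSpace ℝ (Fin n), 0 ≤ q.1 →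
      pdT ρ q + divX (fun z => ρ z • v z) q = 0)
    (hmom : ∀ q : ℝ × EuclideanSpace ℝ (Fin n), 0 ≤ q.1 → ∀ i,
      pdT (fun z => ρ z * v z i) q
        + (∑ j, pdX (fun z => ρ z * v z i * v z j) j q) + pdX p i q
      = ∑ j, pdX (fun z => T z i j) j q)
    (hpress : ∀ q : ℝ × EuclideanSpace ℝ (Fin n), 0 ≤ q.1 →
      pdT p q + (∑ i, v q i * pdX p i q) + γ * p q * divX v q
        = (γ - 1) * ∑ i, ∑ j, T q i j * pdX (fun z => v z i) j q)
    -- finite positive total mass, constant in time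
    (m : ℝ) (hm : 0 < m)
    (hmass : ∀ t : ℝ, 0 ≤ t → Integrable (fun x => ρ (t, x)) ∧ (∫ x, ρ (t, x)) = m)
    -- finite positive conserved total energy
    (𝓔 : ℝ) (h𝓔 : 0 < 𝓔)
    (hEkint : ∀ t : ℝ, 0 ≤ t → Integrable (fun x => ρ (t, x) * ‖v (t, x)‖ ^ 2))
    (hEiint : ∀ t : ℝ, 0 ≤ t → Integrable (fun x => p (t, x)))
    (henergy : ∀ t : ℝ, 0 ≤ t →
      (1/2) * (∫ x, ρ (t, x) * ‖v (t, x)‖ ^ 2) + (1 / (γ - 1)) * (∫ x, p (t, x)) = 𝓔)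
    -- finite momentum of mass satisfying G'' = 2E_k + n(γ−1)E_i
    (hGint : ∀ t : ℝ, 0 ≤ t → Integrable (fun x => ρ (t, x) * ‖x‖ ^ 2))
    (hGdiff : ∀ t : ℝ, 0 ≤ t →
      DifferentiableAt ℝ (fun s => (1/2) * ∫ x, ρ (s, x) * ‖x‖ ^ 2) t)
    (hG'' : ∀ t : ℝ, 0 ≤ t →
      HasDerivAt (deriv (fun s => (1/2) * ∫ x, ρ (s, x) * ‖x‖ ^ 2))
        (2 * ((1/2) * ∫ x, ρ (t, x) * ‖v (t, x)‖ ^ 2)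
          + n * (γ - 1) * ((1 / (γ - 1)) * ∫ x, p (t, x))) t)
    -- time-independent decay bounds
    (hdecay : ∀ t : ℝ, 0 ≤ t → ∀ x : EuclideanSpace ℝ (Fin n),
      (R₀ ^ ((n:ℝ) + 1) + ((n:ℝ) + 1) * Cv * t) ^ (1 / ((n:ℝ) + 1)) < ‖x‖ →
      ‖v (t, x)‖ ≤ Cv * ‖x‖ ^ (-(n:ℝ)) ∧
      ‖fderiv ℝ (fun y => v (t, y)) x‖ ≤ CDv * ‖x‖ ^ (-(n:ℝ) - 1) ∧
      ρ (t, x) ≤ Cρ * ‖x‖ ^ (-(n:ℝ) - 2 - ε) ∧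
      p (t, x) ≤ Cp * ‖x‖ ^ (-(n:ℝ) - ε)) :
    False :=
  navier_stokes_no_solution_with_constant_bounds_general n hn γ hγ Cv CDv Cρ Cp R₀ ε hCv hCρ hR₀ hε
    ρ p v hρnonneg hpnonneg m hm hmass 𝓔 h𝓔 henergy hGint hGdiff hG'' hdecay
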